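/- arXiv:2601.16083 — 5 statements merged into one kernel-verified Lean document; each statement's English description precedes it below -/
import Mathlib

section
/- Let p be a probability mass function on a finite nonempty type Q with MAP probability p* := max_{q∈Q} p(q). For any subset S ⊆ Q, define p̂ := max_{q∈S} p(q) (with p̂ := 0 if S is empty) and the residual mass p̌ := 1 − Σ_{q∈S} p(q). Then for every ε ∈ (0,1): if p̂ ≥ p̌·(1−ε), then p̂ ≥ p*·(1−ε). -/
open Finset

noncomputable def sampleMax {Q : Type*} (p : Q → ℝ) (S : Finset Q) : ℝ :=
  if h : S.Nonempty then S.sup' h p else 0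

/-!
Let `q` be a maximizer of `p`. If `q ∈ S`, then `p̂ = p*`. Otherwise `q` lies in the unsampled
part of `Q`, so `p* = p q ≤ p̌`. Either way `p* ≤ max p̂ p̌`, and multiplying by `1 - ε ∈ (0, 1)`
turns the stopping condition `p̌ (1 - ε) ≤ p̂` into `p* (1 - ε) ≤ p̂`.
-/

section

variable {Q : Type*} (p : Q → ℝ) {S : Finset Q}

theorem le_sampleMax_of_mem {q : Q} (hq : q ∈ S) : p q ≤ sampleMax p S := by
  rw [sampleMax, dif_pos ⟨q, hq⟩]
  exact le_sup' p hq

theorem sampleMax_nonneg (hp0 : ∀ q, 0 ≤ p q) : 0 ≤ sampleMax p S := by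
  unfold sampleMax
  split_ifs with hS
  · obtain ⟨q, hq⟩ := hS
    exact (hp0 q).trans (le_sup' p hq)
  · exact le_rfl

variable [Fintype Q]

theorem le_one_sub_sum_of_notMem (hp0 : ∀ q, 0 ≤ p q) (hp1 : ∑ q, p q = 1) {q : Q}
    (hq : q ∉ S) : p q ≤ 1 - ∑ x ∈ S, p x := by
  have : ∑ x ∈ S.cons q hq, p x ≤ ∑ x, p x :=
    sum_le_univ_sum_of_nonneg hp0
  rw [sum_cons, hp1] at this
  linarith

theorem sup'_le_max_sampleMax_one_sub_sum [Nonempty Q] (hp0 : ∀ q, 0 ≤ p q)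
    (hp1 : ∑ q, p q = 1) (S : Finset Q) :
    univ.sup' univ_nonempty p ≤ max (sampleMax p S) (1 - ∑ q ∈ S, p q) := by
  refine sup'_le _ _ fun q _ => ?_
  by_cases hq : q ∈ S
  · exact le_max_of_le_left (le_sampleMax_of_mem p hq)
  · exact le_max_of_le_right (le_one_sub_sum_of_notMem p hp0 hp1 hq)

end

/-- soundness of the deterministic stopping condition:
if `p̂ ≥ p̌·(1-ε)` then `p̂ ≥ p*·(1-ε)`. -/
theorem stmt2 {Q : Type*} [Fintype Q] [Nonempty Q] (p : Q → ℝ)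
    (hp0 : ∀ q, 0 ≤ p q) (hp1 : ∑ q, p q = 1)
    (S : Finset Q) (ε : ℝ) (hε : ε ∈ Set.Ioo (0 : ℝ) 1)
    (h : (1 - ∑ q ∈ S, p q) * (1 - ε) ≤ sampleMax p S) :
    (Finset.univ.sup' Finset.univ_nonempty p) * (1 - ε) ≤ sampleMax p S := by
  obtain ⟨hε0, hε1⟩ := hε
  have hsample : sampleMax p S * (1 - ε) ≤ sampleMax p S :=
    mul_le_of_le_one_right (sampleMax_nonneg p hp0) (by linarith)
  calc univ.sup' univ_nonempty p * (1 - ε)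
      ≤ max (sampleMax p S) (1 - ∑ q ∈ S, p q) * (1 - ε) :=
        mul_le_mul_of_nonneg_right (sup'_le_max_sampleMax_one_sub_sum p hp0 hp1 S) (by linarith)
    _ = max (sampleMax p S * (1 - ε)) ((1 - ∑ q ∈ S, p q) * (1 - ε)) :=
        max_mul_of_nonneg _ _ (by linarith)
    _ ≤ sampleMax p S := max_le hsample h
end

section
/- Let p be a probability mass function on a finite nonempty type Q with MAP probability p* := max_{q∈Q} p(q). For any subset S ⊆ Q, define p̂ := max_{q∈S} p(q) (with p̂ := 0 if S is empty) and the residual mass p̌ := 1 − Σ_{q∈S} p(q). If p̂ ≥ p̌, then p̂ = p*, i.e., the sampled maximizer is an exact MAP solution. -/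
open Finset

theorem le_sum_sub_sum_of_notMem {ι M : Type*} [Fintype ι] [AddCommGroup M] [PartialOrder M]
    [IsOrderedAddMonoid M] {f : ι → M} (hf : 0 ≤ f) {S : Finset ι} {i : ι} (hi : i ∉ S) :
    f i ≤ ∑ j, f j - ∑ j ∈ S, f j := by
  classical
  rw [← sum_compl_add_sum S f, add_sub_cancel_right]
  exact single_le_sum (fun j _ => hf j) (mem_compl.mpr hi)

theorem sup'_eq_sup'_univ_of_sum_sub_sum_le {ι M : Type*} [Fintype ι] [AddCommGroup M]
    [LinearOrder M] [IsOrderedAddMonoid M] {f : ι → M} (hf : 0 ≤ f) {S : Finset ι}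
    (hS : S.Nonempty) (h : ∑ j, f j - ∑ j ∈ S, f j ≤ S.sup' hS f) :
    S.sup' hS f = univ.sup' (hS.mono (subset_univ S)) f := by
  refine le_antisymm (sup'_mono f (subset_univ S) hS) (sup'_le _ f fun i _ => ?_)
  by_cases hi : i ∈ S
  · exact le_sup' f hi
  · exact (le_sum_sub_sum_of_notMem hf hi).trans h

/-- if the best sampled probability `p̂` weakly exceeds the residual
mass `p̌`, then `p̂` equals the MAP probability `p*` exactly. -/
theorem stmt3 {Q : Type*} [Fintype Q] [Nonempty Q] (p : Q → ℝ)
    (hp0 : ∀ q, 0 ≤ p q) (hp1 : ∑ q, p q = 1)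
    (S : Finset Q)
    (h : 1 - ∑ q ∈ S, p q ≤ sampleMax p S) :
    sampleMax p S = Finset.univ.sup' Finset.univ_nonempty p := by
  by_cases hS : S.Nonempty
  · rw [sampleMax, dif_pos hS] at h ⊢
    rw [← hp1] at h
    exact sup'_eq_sup'_univ_of_sum_sub_sum_le hp0 hS h
  · rw [not_nonempty_iff_eq_empty.mp hS, sampleMax, sum_empty] at h
    norm_num at h
end

section
/- Let p be a probability mass function on a finite nonempty type Q with MAP probability p* := max_{q∈Q} p(q), and let ε, δ ∈ (0,1) and m ≥ 1. Under the product measure P^⊗m on Q^m, with sample maximum p̂_m := max_{i<m} p(q_i), the probability of the event { p̂_m < p*·(1−ε) and m·p̂_m ≥ (1−ε)·log(1/δ) } is at most δ. In other words, when the probabilistic stopping condition m ≥ p̂_m⁻¹·(1−ε)·log(1/δ) of Algorithm 1 is triggered, the returned candidate fails to be an ε-approximate MAP solution with probability at most δ. -/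
open Finset

/-- The probability of event `E` under `m` i.i.d. draws from the pmf `p`
on a finite type `Q` (i.e., the `m`-fold product measure of `p`). -/
noncomputable def iidProb {Q : Type*} [Fintype Q] (p : Q → ℝ) (m : ℕ)
    (E : Set (Fin m → Q)) : ℝ :=
  ∑ x : Fin m → Q, E.indicator (fun y => ∏ i, p (y i)) x

/-- The sample maximum `p̂_m = max_{i<m} p (x i)` of a sample `x : Fin m → Q`. -/
noncomputable def sampleMaxVec {Q : Type*} [DecidableEq Q] (p : Q → ℝ) {m : ℕ}
    (x : Fin m → Q) : ℝ :=
  sampleMax p (Finset.image x Finset.univ)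

/-!
If the event has a point, then `(1 - ε) log (1/δ) ≤ m p̂_m ≤ m p* (1 - ε)`, so
`log (1/δ) ≤ m p*`. On the event `p̂_m < p*`, so no draw hits a MAP point `q*`; the
probability of that is `(1 - p*)^m ≤ exp (-m p*) ≤ δ`.
-/

lemma one_sub_pow_le_of_log_one_div_le {t δ : ℝ} {m : ℕ} (ht : t ≤ 1) (hδ : 0 < δ)
    (h : Real.log (1 / δ) ≤ m * t) : (1 - t) ^ m ≤ δ :=
  calc (1 - t) ^ m ≤ Real.exp (-t) ^ m :=
        pow_le_pow_left₀ (by linarith) (by linarith [Real.add_one_le_exp (-t)]) m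
    _ = Real.exp (-(m * t)) := by rw [← Real.exp_nat_mul]; ring_nf
    _ ≤ Real.exp (Real.log δ) :=
        Real.exp_le_exp.2 (by rw [one_div, Real.log_inv] at h; linarith)
    _ = δ := Real.exp_log hδ

lemma le_sampleMaxVec {Q : Type*} [DecidableEq Q] (p : Q → ℝ) {m : ℕ} (x : Fin m → Q)
    (i : Fin m) : p (x i) ≤ sampleMaxVec p x := by
  have hx : x i ∈ univ.image x := mem_image_of_mem x (mem_univ i)
  rw [sampleMaxVec, sampleMax, dif_pos ⟨_, hx⟩]
  exact le_sup' p hx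

lemma ne_of_sampleMaxVec_lt {Q : Type*} [DecidableEq Q] {p : Q → ℝ} {m : ℕ}
    {x : Fin m → Q} {a : Q} (h : sampleMaxVec p x < p a) (i : Fin m) : x i ≠ a :=
  fun hxa => (le_sampleMaxVec p x i).not_gt (hxa ▸ h)

section iidProb

variable {Q : Type*} [Fintype Q]

lemma iidProb_empty (p : Q → ℝ) (m : ℕ) : iidProb p m ∅ = 0 := by
  simp [iidProb]

lemma iidProb_mono {p : Q → ℝ} (hp0 : ∀ q, 0 ≤ p q) {m : ℕ} {E F : Set (Fin m → Q)}
    (h : E ⊆ F) : iidProb p m E ≤ iidProb p m F :=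
  sum_le_sum fun x _ =>
    Set.indicator_le_indicator_of_subset h (fun _ => prod_nonneg fun _ _ => hp0 _) x

lemma iidProb_forall_mem (p : Q → ℝ) (m : ℕ) (S : Finset Q) :
    iidProb p m {x | ∀ i, x i ∈ S} = (∑ q ∈ S, p q) ^ m := by
  have hpi : {x : Fin m → Q | ∀ i, x i ∈ S} =
      (Fintype.piFinset fun _ : Fin m => S : Set (Fin m → Q)) := by
    ext x
    simp
  rw [← Fin.prod_const, prod_univ_sum, iidProb, hpi, sum_indicator_subset _ (subset_univ _)]

end iidProb

theorem stmt4_general {Q : Type*} [Fintype Q] [Nonempty Q] [DecidableEq Q] (p : Q → ℝ)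
    (hp0 : ∀ q, 0 ≤ p q) (hp1 : ∑ q, p q = 1)
    (ε δ : ℝ) (hε : ε ∈ Set.Ioo (0 : ℝ) 1) (hδ : δ ∈ Set.Ioo (0 : ℝ) 1)
    (m : ℕ) :
    iidProb p m
        {x | sampleMaxVec p x < (Finset.univ.sup' Finset.univ_nonempty p) * (1 - ε) ∧
          (1 - ε) * Real.log (1 / δ) ≤ (m : ℝ) * sampleMaxVec p x} ≤ δ := by
  obtain ⟨qmax, -, hqs⟩ := exists_mem_eq_sup' univ_nonempty p
  rw [hqs]
  set E := {x : Fin m → Q | sampleMaxVec p x < p qmax * (1 - ε) ∧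
    (1 - ε) * Real.log (1 / δ) ≤ m * sampleMaxVec p x}
  have hshrink : p qmax * (1 - ε) ≤ p qmax := mul_le_of_le_one_right (hp0 qmax) (by linarith [hε.1])
  rcases E.eq_empty_or_nonempty with hE | ⟨x₀, hx₀⟩
  · rw [hE, iidProb_empty]
    exact hδ.1.le
  have hlog : Real.log (1 / δ) ≤ m * p qmax := by
    refine le_of_mul_le_mul_left ?_ (sub_pos.2 hε.2)
    calc (1 - ε) * Real.log (1 / δ) ≤ m * sampleMaxVec p x₀ := hx₀.2
      _ ≤ m * (p qmax * (1 - ε)) := mul_le_mul_of_nonneg_left hx₀.1.le m.cast_nonneg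
      _ = (1 - ε) * (m * p qmax) := by ring
  have hmiss : E ⊆ {x | ∀ i, x i ∈ univ.erase qmax} := fun x hx i =>
    mem_erase.2 ⟨ne_of_sampleMaxVec_lt (hx.1.trans_le hshrink) i, mem_univ _⟩
  calc iidProb p m E ≤ iidProb p m {x | ∀ i, x i ∈ univ.erase qmax} := iidProb_mono hp0 hmiss
    _ = (1 - p qmax) ^ m := by rw [iidProb_forall_mem, sum_erase_eq_sub (mem_univ _), hp1]
    _ ≤ δ := one_sub_pow_le_of_log_one_div_le
        (hp1 ▸ single_le_sum (fun q _ => hp0 q) (mem_univ qmax)) hδ.1 hlog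

/-- soundness of the probabilistic stopping condition of Algorithm 1:
the probability that the candidate fails to be an ε-approximate MAP solution while
the stopping condition `m ≥ p̂_m⁻¹ (1-ε) log(1/δ)` is triggered is at most δ. -/
theorem stmt4 {Q : Type*} [Fintype Q] [Nonempty Q] [DecidableEq Q] (p : Q → ℝ)
    (hp0 : ∀ q, 0 ≤ p q) (hp1 : ∑ q, p q = 1)
    (ε δ : ℝ) (hε : ε ∈ Set.Ioo (0 : ℝ) 1) (hδ : δ ∈ Set.Ioo (0 : ℝ) 1)
    (m : ℕ) (hm : 1 ≤ m) :
    iidProb p m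
        {x | sampleMaxVec p x < (Finset.univ.sup' Finset.univ_nonempty p) * (1 - ε) ∧
          (1 - ε) * Real.log (1 / δ) ≤ (m : ℝ) * sampleMaxVec p x} ≤ δ :=
  stmt4_general p hp0 hp1 ε δ hε hδ m
end

section
/- Let p be a probability mass function on a finite nonempty type Q with MAP probability p* := max_{q∈Q} p(q) ∈ (0,1) and min-entropy h := −log₂ p*, and suppose the ε-superlevel set G_ε = {q : p(q) ≥ p*(1−ε)} is a singleton, so that μ_ε = p*. If m i.i.d. draws hit G_ε with probability at least 1−δ for some δ ∈ (0,1), i.e., (1−p*)^m ≤ δ, then m ≥ log(1/δ)/log(1/(1−p*)) ≥ (1−p*)·2^h·log(1/δ). Hence for this adversarial class of distributions, Ω(exp(h)·log(1/δ)) samples are necessary for PAC certification. -/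
/-! Since `0 < 1 - p* < 1`, taking logarithms in `(1 - p*)^m ≤ δ` gives
`m ≥ log (1/δ) / log (1/(1 - p*))`. The elementary bound `log (1/(1-x)) ≤ x/(1-x)` then gives
`log (1/δ) / log (1/(1 - p*)) ≥ (1 - p*) · (1/p*) · log (1/δ)`, and `1/p* = 2^h`. -/

namespace Real

theorem rpow_neg_logb {b x : ℝ} (hb0 : 0 < b) (hb1 : b ≠ 1) (hx : 0 < x) :
    b ^ (-logb b x) = x⁻¹ := by
  rw [rpow_neg hb0.le, rpow_logb hb0 hb1 hx]

theorem log_one_div_one_sub_le {x : ℝ} (hx : x < 1) : log (1 / (1 - x)) ≤ x / (1 - x) := by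
  have hpos : 0 < 1 - x := by linarith
  have h := one_sub_inv_le_log_of_pos hpos
  rw [one_div, log_inv]
  have hrw : x / (1 - x) = (1 - x)⁻¹ - 1 := by field_simp; ring
  linarith

theorem div_log_one_div_le_of_pow_le {a δ : ℝ} (ha0 : 0 < a) (ha1 : a < 1)
    {m : ℕ} (h : a ^ m ≤ δ) : log (1 / δ) / log (1 / a) ≤ m := by
  have hlog : m * log a ≤ log δ := by
    rw [← log_pow]
    exact log_le_log (pow_pos ha0 m) h
  have hla : 0 < -log a := neg_pos.mpr (log_neg ha0 ha1)
  rw [one_div, one_div, log_inv, log_inv, div_le_iff₀ hla]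
  linarith

theorem one_sub_mul_inv_mul_le_div_log {x L : ℝ} (hx0 : 0 < x) (hx1 : x < 1) (hL : 0 ≤ L) :
    (1 - x) * (x⁻¹ * L) ≤ L / log (1 / (1 - x)) := by
  have hpos : 0 < 1 - x := by linarith
  have hlog : 0 < log (1 / (1 - x)) := log_pos ((one_lt_div hpos).mpr (by linarith))
  calc (1 - x) * (x⁻¹ * L) = L / (x / (1 - x)) := by field_simp
    _ ≤ L / log (1 / (1 - x)) := div_le_div_of_nonneg_left hL hlog (log_one_div_one_sub_le hx1)

end Real

open Real

theorem stmt8_general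
    (pstar h : ℝ)
    (hp01 : pstar ∈ Set.Ioo (0 : ℝ) 1) (hh : h = -Real.logb 2 pstar)
    (δ : ℝ) (hδ : δ ∈ Set.Ioo (0 : ℝ) 1)
    (m : ℕ) (hhit : (1 - pstar) ^ m ≤ δ) :
    Real.log (1 / δ) / Real.log (1 / (1 - pstar)) ≤ (m : ℝ) ∧
      (1 - pstar) * ((2 : ℝ) ^ h * Real.log (1 / δ)) ≤
        Real.log (1 / δ) / Real.log (1 / (1 - pstar)) := by
  obtain ⟨hps0, hps1⟩ := hp01
  obtain ⟨hδ0, hδ1⟩ := hδ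
  refine ⟨div_log_one_div_le_of_pow_le (by linarith) (by linarith) hhit, ?_⟩
  rw [hh, rpow_neg_logb two_pos (by norm_num) hps0]
  exact one_sub_mul_inv_mul_le_div_log hps0 hps1 (log_nonneg (one_le_one_div hδ0 hδ1.le))

/-- worst-case lower bound. If the ε-superlevel set is a singleton
(so its mass is `p*`) and `m` i.i.d. draws hit it with probability at least `1-δ`,
i.e. `(1-p*)^m ≤ δ`, then `m ≥ log(1/δ)/log(1/(1-p*)) ≥ (1-p*)·2^h·log(1/δ)`,
where `h = -log₂ p*` is the min-entropy. -/
theorem stmt8 {Q : Type*} [Fintype Q] [Nonempty Q] (p : Q → ℝ)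
    (hp0 : ∀ q, 0 ≤ p q) (hp1 : ∑ q, p q = 1)
    (pstar h : ℝ) (hpstar : pstar = Finset.univ.sup' Finset.univ_nonempty p)
    (hp01 : pstar ∈ Set.Ioo (0 : ℝ) 1) (hh : h = -Real.logb 2 pstar)
    (ε δ : ℝ) (hε : ε ∈ Set.Ioo (0 : ℝ) 1) (hδ : δ ∈ Set.Ioo (0 : ℝ) 1)
    (hsingleton : ∃ q₀ : Q, ∀ q : Q, (pstar * (1 - ε) ≤ p q ↔ q = q₀))
    (m : ℕ) (hhit : (1 - pstar) ^ m ≤ δ) :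
    Real.log (1 / δ) / Real.log (1 / (1 - pstar)) ≤ (m : ℝ) ∧
      (1 - pstar) * ((2 : ℝ) ^ h * Real.log (1 / δ)) ≤
        Real.log (1 / δ) / Real.log (1 / (1 - pstar)) :=
  stmt8_general pstar h hp01 hh δ hδ m hhit
end

section
/- Let Q be a finite type, S ⊊ Q a proper nonempty subset, and f : S → [0,1] a function with Σ_{q∈S} f(q) ≤ 1. Define p̂ := max_{q∈S} f(q) and p̌ := 1 − Σ_{q∈S} f(q). If p̂ < p̌·(1−ε) for some ε ∈ (0,1), then there exists a probability mass function P on Q with P(q) = f(q) for all q ∈ S and max_{q∈Q} P(q) ≥ p̌; consequently p̂ < (max_{q∈Q} P(q))·(1−ε), i.e., the observed maximizer is not an ε-approximate MAP solution under P. -/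
/-!
Put the whole unobserved mass `p̌ = 1 - ∑ q ∈ S, f q` on one atom `q₀ ∉ S`. The result is a pmf
agreeing with `f` on `S` whose largest atom weighs at least `p̌`, so `p̂ < p̌ (1 - ε)` already
gives `p̂ < (max P) (1 - ε)`.
-/

open Finset

noncomputable def residualCompletion {Q : Type*} [DecidableEq Q] (S : Finset Q) (f : Q → ℝ)
    (q₀ : Q) : Q → ℝ :=
  S.piecewise f 0 + Pi.single q₀ (1 - ∑ q ∈ S, f q)

namespace residualCompletion

variable {Q : Type*} [DecidableEq Q] {S : Finset Q} {f : Q → ℝ} {q₀ : Q}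

theorem nonneg (hf0 : ∀ q ∈ S, 0 ≤ f q) (hfsum : ∑ q ∈ S, f q ≤ 1) (q : Q) :
    0 ≤ residualCompletion S f q₀ q := by
  have hobs : 0 ≤ S.piecewise f 0 q := by
    by_cases hq : q ∈ S
    · simpa only [piecewise_eq_of_mem _ _ _ hq] using hf0 q hq
    · simp only [piecewise_eq_of_notMem _ _ _ hq, Pi.zero_apply, le_refl]
  have hres : (0 : Q → ℝ) ≤ Pi.single q₀ (1 - ∑ q ∈ S, f q) :=
    Pi.single_nonneg.2 (sub_nonneg.2 hfsum)
  exact add_nonneg hobs (hres q)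

theorem sum_eq_one [Fintype Q] : ∑ q, residualCompletion S f q₀ q = 1 := by
  simp only [residualCompletion, Pi.add_apply, sum_add_distrib, sum_piecewise, univ_inter,
    Pi.zero_apply, sum_const_zero, add_zero, sum_pi_single', mem_univ, if_true,
    add_sub_cancel]

theorem apply_of_mem (hq₀ : q₀ ∉ S) {q : Q} (hq : q ∈ S) :
    residualCompletion S f q₀ q = f q := by
  have hne : q ≠ q₀ := fun h => hq₀ (h ▸ hq)
  simp only [residualCompletion, Pi.add_apply, piecewise_eq_of_mem _ _ _ hq,
    Pi.single_eq_of_ne hne, add_zero]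

theorem apply_self (hq₀ : q₀ ∉ S) : residualCompletion S f q₀ q₀ = 1 - ∑ q ∈ S, f q := by
  simp only [residualCompletion, Pi.add_apply, piecewise_eq_of_notMem _ _ _ hq₀,
    Pi.zero_apply, Pi.single_eq_same, zero_add]

theorem residual_le_sup' [Fintype Q] [Nonempty Q] (hq₀ : q₀ ∉ S) :
    1 - ∑ q ∈ S, f q ≤ univ.sup' univ_nonempty (residualCompletion S f q₀) :=
  apply_self hq₀ ▸ le_sup' (residualCompletion S f q₀) (mem_univ q₀)

end residualCompletion

theorem stmt10_general {Q : Type*} [Fintype Q] [Nonempty Q] (S : Finset Q)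
    (hSproper : S ≠ Finset.univ)
    (f : Q → ℝ) (hf0 : ∀ q ∈ S, 0 ≤ f q)
    (hfsum : ∑ q ∈ S, f q ≤ 1)
    (ε : ℝ) (hε : ε ∈ Set.Ioo (0 : ℝ) 1)
    (h : sampleMax f S < (1 - ∑ q ∈ S, f q) * (1 - ε)) :
    ∃ P : Q → ℝ, (∀ q, 0 ≤ P q) ∧ ∑ q, P q = 1 ∧ (∀ q ∈ S, P q = f q) ∧
      1 - ∑ q ∈ S, f q ≤ Finset.univ.sup' Finset.univ_nonempty P ∧
      sampleMax f S < (Finset.univ.sup' Finset.univ_nonempty P) * (1 - ε) := by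
  classical
  obtain ⟨q₀, -, hq₀⟩ := exists_of_ssubset (ssubset_univ_iff.2 hSproper)
  have hmax := residualCompletion.residual_le_sup' (f := f) hq₀
  refine ⟨residualCompletion S f q₀, residualCompletion.nonneg hf0 hfsum,
    residualCompletion.sum_eq_one, fun q hq => residualCompletion.apply_of_mem hq₀ hq, hmax, ?_⟩
  calc sampleMax f S < (1 - ∑ q ∈ S, f q) * (1 - ε) := h
    _ ≤ _ := mul_le_mul_of_nonneg_right hmax (sub_nonneg.2 hε.2.le)

/-- adversarial completion. If the deterministic stopping condition
fails, i.e. `p̂ < p̌(1-ε)`, then the partial observations `f` on `S` extend to a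
pmf `P` on `Q` whose MAP probability is at least `p̌`; under `P` the observed
maximizer is not an ε-approximate MAP solution. -/
theorem stmt10 {Q : Type*} [Fintype Q] [Nonempty Q] (S : Finset Q)
    (hSne : S.Nonempty) (hSproper : S ≠ Finset.univ)
    (f : Q → ℝ) (hf0 : ∀ q ∈ S, 0 ≤ f q) (hf1 : ∀ q ∈ S, f q ≤ 1)
    (hfsum : ∑ q ∈ S, f q ≤ 1)
    (ε : ℝ) (hε : ε ∈ Set.Ioo (0 : ℝ) 1)
    (h : sampleMax f S < (1 - ∑ q ∈ S, f q) * (1 - ε)) :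
    ∃ P : Q → ℝ, (∀ q, 0 ≤ P q) ∧ ∑ q, P q = 1 ∧ (∀ q ∈ S, P q = f q) ∧
      1 - ∑ q ∈ S, f q ≤ Finset.univ.sup' Finset.univ_nonempty P ∧
      sampleMax f S < (Finset.univ.sup' Finset.univ_nonempty P) * (1 - ε) :=
  stmt10_general S hSproper f hf0 hfsum ε hε h
end
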